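/- arXiv:1910.08460 — 3 statements merged into one kernel-verified Lean document; each statement's English description precedes it below -/
import Mathlib

section
/- If δ'_j ≤ δ_j ≤ 2 δ'_j, where δ_j = ‖(|R_j|^{1/2} + g_j^{-1/2} P_j) E (|R_j|^{1/2} + g_j^{-1/2} P_j)‖_∞ and δ'_j = max(‖|R_j|^{1/2} E |R_j|^{1/2}‖_∞, g_j^{-1/2} ‖|R_j|^{1/2} E P_j‖_2, g_j^{-1} ‖P_j E P_j‖_2). That is, the two quantities δ_j and δ'_j satisfy δ'_j ≤ δ_j ≤ 2 δ'_j. -/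
open Matrix Finset

noncomputable def opNorm {d : ℕ} (A : Matrix (Fin d) (Fin d) ℝ) : ℝ :=
  ‖Matrix.toEuclideanCLM (𝕜 := ℝ) A‖

noncomputable def hsNorm {d : ℕ} (A : Matrix (Fin d) (Fin d) ℝ) : ℝ :=
  Real.sqrt (Matrix.trace (Aᵀ * A))

noncomputable def proj {d : ℕ} (u : Fin d → ℝ) : Matrix (Fin d) (Fin d) ℝ :=
  Matrix.vecMulVec u u

/-- `|R_j|^{1/2}` : square root of the absolute value of the reduced resolvent. -/
noncomputable def sqrtAbsRes {d : ℕ} (lam : Fin d → ℝ) (u : Fin d → Fin d → ℝ)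
    (j : Fin d) : Matrix (Fin d) (Fin d) ℝ :=
  ∑ k ∈ Finset.univ.filter (fun k => k ≠ j), (Real.sqrt |lam k - lam j|)⁻¹ • proj (u k)

/-- `|R_j|^{-1/2}`. -/
noncomputable def invSqrtAbsRes {d : ℕ} (lam : Fin d → ℝ) (u : Fin d → Fin d → ℝ)
    (j : Fin d) : Matrix (Fin d) (Fin d) ℝ :=
  ∑ k ∈ Finset.univ.filter (fun k => k ≠ j), Real.sqrt |lam k - lam j| • proj (u k)

/-- the reduced resolvent `R_j`. -/
noncomputable def res {d : ℕ} (lam : Fin d → ℝ) (u : Fin d → Fin d → ℝ)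
    (j : Fin d) : Matrix (Fin d) (Fin d) ℝ :=
  ∑ k ∈ Finset.univ.filter (fun k => k ≠ j), (lam k - lam j)⁻¹ • proj (u k)

/-- `δ_j`. -/
noncomputable def delta {d : ℕ} (lam : Fin d → ℝ) (u : Fin d → Fin d → ℝ) (j : Fin d)
    (gj : ℝ) (E : Matrix (Fin d) (Fin d) ℝ) : ℝ :=
  opNorm ((sqrtAbsRes lam u j + (Real.sqrt gj)⁻¹ • proj (u j)) * E *
    (sqrtAbsRes lam u j + (Real.sqrt gj)⁻¹ • proj (u j)))

/-- `δ'_j`. -/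
noncomputable def delta' {d : ℕ} (lam : Fin d → ℝ) (u : Fin d → Fin d → ℝ) (j : Fin d)
    (gj : ℝ) (E : Matrix (Fin d) (Fin d) ℝ) : ℝ :=
  max (opNorm (sqrtAbsRes lam u j * E * sqrtAbsRes lam u j))
    (max ((Real.sqrt gj)⁻¹ * hsNorm (sqrtAbsRes lam u j * E * proj (u j)))
      (gj⁻¹ * hsNorm (proj (u j) * E * proj (u j))))

/-!
Put `S = |R_j|^{1/2}`, `P = P_j`, `Q = 1 - P`, `c = g_j^{-1/2}` and `M = (S + c P) E (S + c P)`,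
so that `δ_j = ‖M‖`. Since `S P = P S = 0`, the blocks of `M` are `Q M Q = S E S`,
`Q M P = c S E P` and `P M P = c² P E P`; the last two have rank one, so their Hilbert–Schmidt
norms are operator norms, and `δ'_j` is the largest norm of a block of `M`. Compressing by
projections does not increase the norm, which gives `δ'_j ≤ δ_j`. Conversely
`M = (Q M Q + P M P) + (Q M P + P M Q)`, and each bracket has norm at most the larger of its
two blocks, because its two summands act on orthogonal subspaces with orthogonal ranges;
as `M` is symmetric, `‖P M Q‖ = ‖Q M P‖`, whence `δ_j ≤ 2 δ'_j`.
-/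

open scoped Matrix.Norms.L2Operator

-- The block `p * T * (1 - p)` is left out: for self-adjoint `T` it is the adjoint of
-- `(1 - p) * T * p`.
def maxBlockNorm {A : Type*} [NormedRing A] (p T : A) : ℝ :=
  max ‖(1 - p) * T * (1 - p)‖ (max ‖(1 - p) * T * p‖ ‖p * T * p‖)

section CStarRing

variable {A : Type*} [NormedRing A] [StarRing A] [CStarRing A] {p : A}

theorem IsStarProjection.norm_mul_mul_le {q : A} (hp : IsStarProjection p)
    (hq : IsStarProjection q) (T : A) : ‖p * T * q‖ ≤ ‖T‖ :=
  calc ‖p * T * q‖ ≤ ‖p‖ * ‖T‖ * ‖q‖ := norm_mul₃_le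
    _ ≤ 1 * ‖T‖ * 1 := by gcongr; exacts [hp.norm_le, hq.norm_le]
    _ = ‖T‖ := by ring

theorem maxBlockNorm_le_norm (hp : IsStarProjection p) (T : A) : maxBlockNorm p T ≤ ‖T‖ :=
  max_le (hp.one_sub.norm_mul_mul_le hp.one_sub T) <|
    max_le (hp.one_sub.norm_mul_mul_le hp T) (hp.norm_mul_mul_le hp T)

end CStarRing

namespace ContinuousLinearMap

variable {𝕜 H : Type*} [RCLike 𝕜] [NormedAddCommGroup H] [InnerProductSpace 𝕜 H]
  [CompleteSpace H]

theorem inner_apply_apply_eq_zero {T U : H →L[𝕜] H} (h : star T * U = 0) (x : H) :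
    inner 𝕜 (T x) (U x) = 0 := by
  rw [← adjoint_inner_right, ← star_eq_adjoint, ← mul_apply_eq_comp, h, _root_.zero_apply,
    inner_zero_right]

theorem norm_apply_sq_add_norm_sub_apply_sq {p : H →L[𝕜] H} (hp : IsStarProjection p) (x : H) :
    ‖p x‖ ^ 2 + ‖x - p x‖ ^ 2 = ‖x‖ ^ 2 := by
  have h : inner 𝕜 (p x) ((1 - p) x) = 0 :=
    inner_apply_apply_eq_zero (by rw [hp.isSelfAdjoint.star_eq, hp.mul_one_sub_self]) x
  rw [_root_.sub_apply, one_apply_eq_self] at h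
  rw [sq, sq, sq, ← norm_add_sq_eq_norm_sq_add_norm_sq_of_inner_eq_zero _ _ h, add_sub_cancel]

theorem norm_add_le_max_of_star_mul_eq_zero {T U p : H →L[𝕜] H} (hp : IsStarProjection p)
    (hT : T * p = 0) (hU : U * p = U) (hTU : star T * U = 0) :
    ‖T + U‖ ≤ max ‖T‖ ‖U‖ := by
  set K := max ‖T‖ ‖U‖
  -- `T x ⊥ U x`, and `T`, `U` only see the orthogonal pieces `x - p x`, `p x` of `x`.
  refine opNorm_le_bound _ (by positivity) fun x => ?_
  have hTx : T x = T (x - p x) := by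
    rw [map_sub, ← mul_apply_eq_comp, hT, _root_.zero_apply, sub_zero]
  have hUx : U x = U (p x) := by rw [← mul_apply_eq_comp, hU]
  have hsq : ‖(T + U) x‖ ^ 2 ≤ (K * ‖x‖) ^ 2 := calc
    ‖(T + U) x‖ ^ 2 = ‖T x‖ ^ 2 + ‖U x‖ ^ 2 := by
      rw [_root_.add_apply, sq, sq, sq,
        norm_add_sq_eq_norm_sq_add_norm_sq_of_inner_eq_zero _ _ (inner_apply_apply_eq_zero hTU x)]
    _ ≤ (K * ‖x - p x‖) ^ 2 + (K * ‖p x‖) ^ 2 := by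
      rw [hTx, hUx]
      gcongr
      · exact (le_opNorm _ _).trans (by gcongr; exact le_max_left _ _)
      · exact (le_opNorm _ _).trans (by gcongr; exact le_max_right _ _)
    _ = (K * ‖x‖) ^ 2 := by
      rw [mul_pow, mul_pow, ← mul_add, add_comm, norm_apply_sq_add_norm_sub_apply_sq hp, mul_pow]
  exact (pow_le_pow_iff_left₀ (norm_nonneg _) (by positivity) two_ne_zero).mp hsq

theorem norm_le_max_add_max {p : H →L[𝕜] H} (hp : IsStarProjection p) (T : H →L[𝕜] H) :
    ‖T‖ ≤ max ‖(1 - p) * T * (1 - p)‖ ‖p * T * p‖ +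
      max ‖p * T * (1 - p)‖ ‖(1 - p) * T * p‖ := by
  have hqp : ∀ X, (1 - p) * (p * X) = 0 := fun X => by
    rw [← mul_assoc, hp.one_sub_mul_self, zero_mul]
  have hpq : ∀ X, p * ((1 - p) * X) = 0 := fun X => by
    rw [← mul_assoc, hp.mul_one_sub_self, zero_mul]
  have hq : star (1 - p) = 1 - p := hp.one_sub.isSelfAdjoint.star_eq
  have hdecomp :
      T = ((1 - p) * T * (1 - p) + p * T * p) + (p * T * (1 - p) + (1 - p) * T * p) := by
    noncomm_ring
  calc ‖T‖ = ‖((1 - p) * T * (1 - p) + p * T * p) + (p * T * (1 - p) + (1 - p) * T * p)‖ :=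
        congrArg _ hdecomp
    _ ≤ ‖(1 - p) * T * (1 - p) + p * T * p‖ + ‖p * T * (1 - p) + (1 - p) * T * p‖ :=
        norm_add_le _ _
    _ ≤ _ := by
      gcongr <;> apply norm_add_le_max_of_star_mul_eq_zero hp <;>
        simp [mul_assoc, star_mul, hq, hp.isSelfAdjoint.star_eq, hqp, hpq,
          hp.one_sub_mul_self, hp.isIdempotentElem.eq]

theorem norm_le_two_mul_maxBlockNorm {p T : H →L[𝕜] H} (hp : IsStarProjection p)
    (hT : IsSelfAdjoint T) : ‖T‖ ≤ 2 * maxBlockNorm p T := by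
  have hstar : star ((1 - p) * T * p) = p * T * (1 - p) := by
    simp [star_mul, mul_assoc, hT.star_eq, hp.isSelfAdjoint.star_eq,
      hp.one_sub.isSelfAdjoint.star_eq]
  have h := norm_le_max_add_max hp T
  rw [← hstar, norm_star ((1 - p) * T * p), max_self] at h
  calc ‖T‖ ≤ max ‖(1 - p) * T * (1 - p)‖ ‖p * T * p‖ + ‖(1 - p) * T * p‖ := h
    _ ≤ maxBlockNorm p T + maxBlockNorm p T := by
      unfold maxBlockNorm
      gcongr <;> simp
    _ = 2 * maxBlockNorm p T := by ring

end ContinuousLinearMap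

theorem Matrix.norm_le_two_mul_maxBlockNorm {𝕜 n : Type*} [RCLike 𝕜] [Fintype n]
    [DecidableEq n] {P T : Matrix n n 𝕜} (hP : IsStarProjection P) (hT : IsSelfAdjoint T) :
    ‖T‖ ≤ 2 * maxBlockNorm P T := by
  have := ContinuousLinearMap.norm_le_two_mul_maxBlockNorm
    (hP.map (toEuclideanCLM (n := n) (𝕜 := 𝕜)))
    (hT.map (toEuclideanCLM (n := n) (𝕜 := 𝕜)))
  simpa [maxBlockNorm, cstar_norm_def] using this

theorem maxBlockNorm_add_smul_mul_add_smul {𝕜 A : Type*} [NormedField 𝕜] [NormedRing A]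
    [NormedAlgebra 𝕜 A] {s p : A} (hp : IsIdempotentElem p) (hsp : s * p = 0) (hps : p * s = 0)
    (c : 𝕜) (e : A) :
    maxBlockNorm p ((s + c • p) * e * (s + c • p)) =
      max ‖s * e * s‖ (max (‖c‖ * ‖s * e * p‖) (‖c‖ ^ 2 * ‖p * e * p‖)) := by
  have hqN : (1 - p) * (s + c • p) = s := by
    rw [sub_mul, one_mul, mul_add, mul_smul_comm, hps, hp.eq]; simp
  have hNq : (s + c • p) * (1 - p) = s := by
    rw [mul_sub, mul_one, add_mul, smul_mul_assoc, hsp, hp.eq]; simp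
  have hpN : p * (s + c • p) = c • p := by
    rw [mul_add, mul_smul_comm, hps, hp.eq, zero_add]
  have hNp : (s + c • p) * p = c • p := by
    rw [add_mul, smul_mul_assoc, hsp, hp.eq, zero_add]
  have hblock : ∀ x y : A, x * ((s + c • p) * e * (s + c • p)) * y =
      (x * (s + c • p)) * e * ((s + c • p) * y) := fun x y => by noncomm_ring
  rw [maxBlockNorm, hblock, hblock, hblock, hqN, hNq, hpN, hNp, mul_smul_comm, smul_mul_assoc,
    smul_mul_assoc, mul_smul_comm, smul_smul, norm_smul, norm_smul, ← sq, norm_pow]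

theorem EuclideanSpace.norm_toLp_eq_sqrt_dotProduct {n : Type*} [Fintype n] (a : n → ℝ) :
    ‖WithLp.toLp 2 a‖ = √(a ⬝ᵥ a) := by
  rw [norm_eq_sqrt_real_inner, EuclideanSpace.inner_eq_star_dotProduct]
  simp

section FinDim

variable {d : ℕ}

theorem opNorm_vecMulVec (a b : Fin d → ℝ) :
    opNorm (vecMulVec a b) = ‖WithLp.toLp 2 a‖ * ‖WithLp.toLp 2 b‖ := by
  have : toEuclideanCLM (𝕜 := ℝ) (vecMulVec a b) =
      InnerProductSpace.rankOne ℝ (WithLp.toLp 2 a) (WithLp.toLp 2 b) := by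
    ext x
    simp [vecMulVec_mulVec, EuclideanSpace.inner_eq_star_dotProduct, mul_comm, dotProduct_comm b]
  rw [opNorm, this, InnerProductSpace.norm_rankOne]

theorem hsNorm_vecMulVec (a b : Fin d → ℝ) :
    hsNorm (vecMulVec a b) = ‖WithLp.toLp 2 a‖ * ‖WithLp.toLp 2 b‖ := by
  rw [hsNorm, transpose_vecMulVec, vecMulVec_mul_vecMulVec, trace_vecMulVec, dotProduct_smul,
    smul_eq_mul, Real.sqrt_mul (by simpa using dotProduct_self_star_nonneg a),
    EuclideanSpace.norm_toLp_eq_sqrt_dotProduct, EuclideanSpace.norm_toLp_eq_sqrt_dotProduct]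

theorem isSelfAdjoint_proj (v : Fin d → ℝ) : IsSelfAdjoint (proj v) := by
  rw [IsSelfAdjoint, proj, star_eq_conjTranspose, conjTranspose_vecMulVec]
  simp

theorem proj_mul_proj (v w : Fin d → ℝ) : proj v * proj w = (v ⬝ᵥ w) • vecMulVec v w := by
  rw [proj, proj, vecMulVec_mul_vecMulVec, vecMulVec_smul]

theorem isStarProjection_proj {v : Fin d → ℝ} (hv : v ⬝ᵥ v = 1) :
    IsStarProjection (proj v) :=
  ⟨by rw [IsIdempotentElem, proj_mul_proj, hv, one_smul, proj], isSelfAdjoint_proj v⟩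

theorem hsNorm_mul_proj (A : Matrix (Fin d) (Fin d) ℝ) (w : Fin d → ℝ) :
    hsNorm (A * proj w) = opNorm (A * proj w) := by
  rw [proj, mul_vecMulVec, hsNorm_vecMulVec, opNorm_vecMulVec]

theorem isSelfAdjoint_sqrtAbsRes (lam : Fin d → ℝ) (u : Fin d → Fin d → ℝ) (j : Fin d) :
    IsSelfAdjoint (sqrtAbsRes lam u j) :=
  isSelfAdjoint_sum _ fun _ _ => (IsSelfAdjoint.all _).smul (isSelfAdjoint_proj _)

theorem sqrtAbsRes_mul_proj {lam : Fin d → ℝ} {u : Fin d → Fin d → ℝ}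
    (hON : ∀ k l, u k ⬝ᵥ u l = if k = l then (1 : ℝ) else 0) (j : Fin d) :
    sqrtAbsRes lam u j * proj (u j) = 0 := by
  rw [sqrtAbsRes, Finset.sum_mul]
  refine Finset.sum_eq_zero fun k hk => ?_
  rw [smul_mul_assoc, proj_mul_proj, hON, if_neg (Finset.mem_filter.mp hk).2, zero_smul, smul_zero]

theorem delta'_eq_maxBlockNorm {lam : Fin d → ℝ} {u : Fin d → Fin d → ℝ}
    (hON : ∀ k l, u k ⬝ᵥ u l = if k = l then (1 : ℝ) else 0)
    (E : Matrix (Fin d) (Fin d) ℝ) (j : Fin d) {gj : ℝ} (hgj : 0 < gj) :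
    delta' lam u j gj E = maxBlockNorm (proj (u j))
      ((sqrtAbsRes lam u j + (√gj)⁻¹ • proj (u j)) * E *
        (sqrtAbsRes lam u j + (√gj)⁻¹ • proj (u j))) := by
  have hSP := sqrtAbsRes_mul_proj (lam := lam) hON j
  have hPS : proj (u j) * sqrtAbsRes lam u j = 0 := by
    simpa [star_mul, (isSelfAdjoint_sqrtAbsRes lam u j).star_eq,
      (isSelfAdjoint_proj (u j)).star_eq] using congrArg star hSP
  have hP := isStarProjection_proj (by simpa using hON j j)
  rw [maxBlockNorm_add_smul_mul_add_smul hP.isIdempotentElem hSP hPS, delta', hsNorm_mul_proj,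
    hsNorm_mul_proj, Real.norm_of_nonneg (by positivity), inv_pow, Real.sq_sqrt hgj.le]
  rfl

end FinDim

theorem stmt1_general {d : ℕ} (lam : Fin d → ℝ) (u : Fin d → Fin d → ℝ)
    (hON : ∀ k l, u k ⬝ᵥ u l = if k = l then (1 : ℝ) else 0)
    (E : Matrix (Fin d) (Fin d) ℝ) (hE : E.IsSymm)
    (j : Fin d) (gj : ℝ) (hgj_pos : 0 < gj) :
    delta' lam u j gj E ≤ delta lam u j gj E ∧
      delta lam u j gj E ≤ 2 * delta' lam u j gj E := by
  have hP := isStarProjection_proj (by simpa using hON j j)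
  have hN : IsSelfAdjoint (sqrtAbsRes lam u j + (√gj)⁻¹ • proj (u j)) :=
    (isSelfAdjoint_sqrtAbsRes lam u j).add ((IsSelfAdjoint.all _).smul hP.isSelfAdjoint)
  have hE' : IsSelfAdjoint E := by
    rwa [IsSelfAdjoint, star_eq_conjTranspose, conjTranspose_eq_transpose_of_trivial]
  rw [delta'_eq_maxBlockNorm hON E j hgj_pos]
  exact ⟨maxBlockNorm_le_norm hP _,
    Matrix.norm_le_two_mul_maxBlockNorm hP (hE'.conjugate_self hN)⟩

theorem stmt1 {d : ℕ} (lam : Fin d → ℝ) (u : Fin d → Fin d → ℝ)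
    (hON : ∀ k l, u k ⬝ᵥ u l = if k = l then (1 : ℝ) else 0)
    (hlam : Antitone lam)
    (E : Matrix (Fin d) (Fin d) ℝ) (hE : E.IsSymm)
    (j : Fin d) (gj : ℝ) (hgj_pos : 0 < gj)
    (hgj : IsLeast {x : ℝ | ∃ k, k ≠ j ∧ x = |lam k - lam j|} gj) :
    delta' lam u j gj E ≤ delta lam u j gj E ∧
      delta lam u j gj E ≤ 2 * delta' lam u j gj E :=
  stmt1_general lam u hON E hE j gj hgj_pos
end

section
/- Suppose δ_j = ‖(|R_j|^{1/2} + g_j^{-1/2} P_j) E (|R_j|^{1/2} + g_j^{-1/2} P_j)‖_∞ < 1/2. Then the j-th eigenvalue λ̂_j of Σ + E satisfies |λ̂_j − λ_j| ≤ δ_j g_j. -/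
/-! Let `W = |R_j|⁻¹ + g_j P_j`, diagonal in the basis `u` with weights `|λ_k - λ_j|` (`k ≠ j`)
and `g_j`. Then `δ_j = ‖W^{-1/2} E W^{-1/2}‖`, so `|⟨x, E x⟩| ≤ δ_j ⟨x, W x⟩` and the quadratic
form of `Σ + E` lies between those of `Σ - δ_j W` and `Σ + δ_j W`. On `span {u_k | k ≥ j}` the
form of `Σ + δ_j W` is at most `(λ_j + δ_j g_j) ‖x‖²`, since `λ_k + δ_j (λ_j - λ_k) ≤ λ_j` for
`δ_j ≤ 1`; this subspace meets `span {û_k | k ≤ j}` nontrivially, which gives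
`λ̂_j ≤ λ_j + δ_j g_j`. The lower bound is symmetric. -/

open Matrix Finset

variable {d : ℕ}

lemma proj_mulVec (v x : Fin d → ℝ) : proj v *ᵥ x = (v ⬝ᵥ x) • v := by
  rw [proj, vecMulVec_mulVec, op_smul_eq_smul]

lemma sum_smul_proj_mulVec (s : Finset (Fin d)) (μ : Fin d → ℝ) (v : Fin d → Fin d → ℝ)
    (x : Fin d → ℝ) :
    (∑ k ∈ s, μ k • proj (v k)) *ᵥ x = ∑ k ∈ s, (μ k * (v k ⬝ᵥ x)) • v k := by
  simp only [sum_mulVec, smul_mulVec, proj_mulVec, smul_smul]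

lemma dotProduct_sum_smul_proj_mulVec (s : Finset (Fin d)) (μ : Fin d → ℝ)
    (v : Fin d → Fin d → ℝ) (x : Fin d → ℝ) :
    x ⬝ᵥ (∑ k ∈ s, μ k • proj (v k)) *ᵥ x = ∑ k ∈ s, μ k * (v k ⬝ᵥ x) ^ 2 := by
  rw [sum_smul_proj_mulVec, dotProduct_sum]
  refine sum_congr rfl fun k _ => ?_
  rw [dotProduct_smul, smul_eq_mul, dotProduct_comm]
  ring

lemma transpose_sum_smul_proj (s : Finset (Fin d)) (μ : Fin d → ℝ) (v : Fin d → Fin d → ℝ) :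
    (∑ k ∈ s, μ k • proj (v k))ᵀ = ∑ k ∈ s, μ k • proj (v k) := by
  simp only [transpose_sum, transpose_smul, proj, transpose_vecMulVec]

lemma abs_dotProduct_mulVec_le (A : Matrix (Fin d) (Fin d) ℝ) (x : Fin d → ℝ) :
    |x ⬝ᵥ A *ᵥ x| ≤ opNorm A * (x ⬝ᵥ x) := by
  set y : EuclideanSpace ℝ (Fin d) := WithLp.toLp 2 x
  have hAx : x ⬝ᵥ A *ᵥ x = inner ℝ y (toEuclideanCLM (𝕜 := ℝ) A y) :=
    (inner_toEuclideanCLM A y y).symm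
  have hx : x ⬝ᵥ x = ‖y‖ ^ 2 := by
    rw [← real_inner_self_eq_norm_sq, EuclideanSpace.inner_toLp_toLp]
    rfl
  rw [hAx, hx]
  calc |inner ℝ y (toEuclideanCLM (𝕜 := ℝ) A y)|
      ≤ ‖y‖ * ‖toEuclideanCLM (𝕜 := ℝ) A y‖ := abs_real_inner_le_norm _ _
    _ ≤ ‖y‖ * (opNorm A * ‖y‖) := by gcongr; exact ContinuousLinearMap.le_opNorm _ _
    _ = opNorm A * ‖y‖ ^ 2 := by ring

abbrev OrthonormalRows (u : Fin d → Fin d → ℝ) : Prop :=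
  ∀ k l, u k ⬝ᵥ u l = if k = l then (1 : ℝ) else 0

namespace OrthonormalRows

variable {u v : Fin d → Fin d → ℝ}

lemma of_mul_transpose_eq_one (hu : OrthonormalRows u) : of u * (of u)ᵀ = 1 := by
  ext k l
  simpa [mul_apply, dotProduct, one_apply] using hu k l

lemma sum_dotProduct_smul_eq (hu : OrthonormalRows u) (x : Fin d → ℝ) :
    ∑ k, (u k ⬝ᵥ x) • u k = x := by
  have hUU : (of u)ᵀ * of u = 1 := mul_eq_one_comm.mp hu.of_mul_transpose_eq_one
  calc ∑ k, (u k ⬝ᵥ x) • u k = ((of u)ᵀ * of u) *ᵥ x := by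
        rw [← mulVec_mulVec]
        ext i
        simp [mulVec, dotProduct, Finset.sum_apply, mul_comm]
    _ = x := by rw [hUU, one_mulVec]

lemma dotProduct_sum_smul_eq (hu : OrthonormalRows u) (c : Fin d → ℝ) (l : Fin d) :
    u l ⬝ᵥ ∑ k, c k • u k = c l := by
  simp [dotProduct_sum, dotProduct_smul, hu]

lemma sum_sq_dotProduct_eq (hu : OrthonormalRows u) (x : Fin d → ℝ) :
    ∑ k, (u k ⬝ᵥ x) ^ 2 = x ⬝ᵥ x := by
  calc ∑ k, (u k ⬝ᵥ x) ^ 2 = x ⬝ᵥ ∑ k, (u k ⬝ᵥ x) • u k := by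
        rw [dotProduct_sum]
        refine sum_congr rfl fun k _ => ?_
        rw [dotProduct_smul, smul_eq_mul, dotProduct_comm x, sq]
    _ = x ⬝ᵥ x := by rw [hu.sum_dotProduct_smul_eq]

lemma dotProduct_eq_zero_of_mem_span (hu : OrthonormalRows u) {S : Finset (Fin d)}
    {x : Fin d → ℝ} (hx : x ∈ Submodule.span ℝ (Set.range fun k : S => u k)) {l : Fin d}
    (hl : l ∉ S) : u l ⬝ᵥ x = 0 := by
  induction hx using Submodule.span_induction with
  | mem y hy =>
    obtain ⟨⟨k, hk⟩, rfl⟩ := hy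
    rw [hu, if_neg (ne_of_mem_of_not_mem hk hl).symm]
  | zero => exact dotProduct_zero _
  | add y z _ _ hy hz => rw [dotProduct_add, hy, hz, add_zero]
  | smul c y _ hy => rw [dotProduct_smul, hy, smul_zero]

lemma finrank_span_eq_card (hu : OrthonormalRows u) (S : Finset (Fin d)) :
    Module.finrank ℝ (Submodule.span ℝ (Set.range fun k : S => u k)) = #S := by
  have hli : LinearIndependent ℝ u :=
    linearIndependent_rows_of_isUnit (IsUnit.of_mul_eq_one _ hu.of_mul_transpose_eq_one)
  exact (_root_.finrank_span_eq_card (hli.comp _ Subtype.val_injective)).trans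
    (Fintype.card_coe S)

lemma exists_ne_zero_dotProduct_eq_zero (hu : OrthonormalRows u) (hv : OrthonormalRows v)
    {S T : Finset (Fin d)} (hcard : d < #S + #T) :
    ∃ x : Fin d → ℝ, x ≠ 0 ∧ (∀ l ∉ S, u l ⬝ᵥ x = 0) ∧ (∀ l ∉ T, v l ⬝ᵥ x = 0) := by
  set V := Submodule.span ℝ (Set.range fun k : S => u k)
  set W := Submodule.span ℝ (Set.range fun k : T => v k)
  have hsup : Module.finrank ℝ ↥(V ⊔ W) ≤ d := by
    simpa using Submodule.finrank_le (V ⊔ W)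
  have hinf : 0 < Module.finrank ℝ ↥(V ⊓ W) := by
    have := Submodule.finrank_sup_add_finrank_inf_eq V W
    rw [hu.finrank_span_eq_card, hv.finrank_span_eq_card] at this
    omega
  have : Nontrivial ↥(V ⊓ W) := Module.nontrivial_of_finrank_pos hinf
  obtain ⟨⟨x, hxV, hxW⟩, hx0⟩ := exists_ne (0 : ↥(V ⊓ W))
  exact ⟨x, fun h => hx0 (Subtype.ext h), fun l hl => hu.dotProduct_eq_zero_of_mem_span hxV hl,
    fun l hl => hv.dotProduct_eq_zero_of_mem_span hxW hl⟩

lemma mul_dotProduct_self_le_sum (hu : OrthonormalRows u) {S : Finset (Fin d)}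
    {x : Fin d → ℝ} (hx : ∀ l ∉ S, u l ⬝ᵥ x = 0) {μ : Fin d → ℝ} {a : ℝ}
    (ha : ∀ k ∈ S, a ≤ μ k) :
    a * (x ⬝ᵥ x) ≤ ∑ k, μ k * (u k ⬝ᵥ x) ^ 2 := by
  rw [← hu.sum_sq_dotProduct_eq, mul_sum]
  refine sum_le_sum fun k _ => ?_
  by_cases hk : k ∈ S
  · exact mul_le_mul_of_nonneg_right (ha k hk) (sq_nonneg _)
  · simp [hx k hk]

lemma sum_le_mul_dotProduct_self (hu : OrthonormalRows u) {S : Finset (Fin d)}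
    {x : Fin d → ℝ} (hx : ∀ l ∉ S, u l ⬝ᵥ x = 0) {μ : Fin d → ℝ} {b : ℝ}
    (hb : ∀ k ∈ S, μ k ≤ b) :
    ∑ k, μ k * (u k ⬝ᵥ x) ^ 2 ≤ b * (x ⬝ᵥ x) := by
  have := hu.mul_dotProduct_self_le_sum hx (μ := -μ) (a := -b) fun k hk => neg_le_neg (hb k hk)
  simpa [neg_mul, sum_neg_distrib] using this

/-- The dimension count behind the Courant–Fischer min-max principle. -/
lemma le_of_forall_sum_mul_sq_le (hu : OrthonormalRows u) (hv : OrthonormalRows v)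
    {μ ν : Fin d → ℝ} {a b : ℝ} {S T : Finset (Fin d)} (hcard : d < #S + #T)
    (ha : ∀ k ∈ S, a ≤ ν k) (hb : ∀ k ∈ T, μ k ≤ b)
    (hle : ∀ x, ∑ k, ν k * (v k ⬝ᵥ x) ^ 2 ≤ ∑ k, μ k * (u k ⬝ᵥ x) ^ 2) :
    a ≤ b := by
  obtain ⟨x, hx0, hxS, hxT⟩ := hv.exists_ne_zero_dotProduct_eq_zero hu hcard
  have hpos : 0 < x ⬝ᵥ x :=
    lt_of_le_of_ne (Fintype.sum_nonneg fun i => mul_self_nonneg (x i))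
      (Ne.symm (dotProduct_self_eq_zero.not.mpr hx0))
  refine le_of_mul_le_mul_right ?_ hpos
  calc a * (x ⬝ᵥ x) ≤ ∑ k, ν k * (v k ⬝ᵥ x) ^ 2 := hv.mul_dotProduct_self_le_sum hxS ha
    _ ≤ ∑ k, μ k * (u k ⬝ᵥ x) ^ 2 := hle x
    _ ≤ b * (x ⬝ᵥ x) := hu.sum_le_mul_dotProduct_self hxT hb

/-- Substitute `y = W^{-1/2} z` with `W = ∑ k, w k • proj (u k)`. -/
lemma abs_dotProduct_mulVec_le_mul_sum (hu : OrthonormalRows u) {w : Fin d → ℝ}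
    (hw : ∀ k, 0 < w k) (E : Matrix (Fin d) (Fin d) ℝ) (y : Fin d → ℝ) :
    |y ⬝ᵥ E *ᵥ y| ≤ opNorm ((∑ k, (√(w k))⁻¹ • proj (u k)) * E *
      (∑ k, (√(w k))⁻¹ • proj (u k))) * ∑ k, w k * (u k ⬝ᵥ y) ^ 2 := by
  set T := ∑ k, (√(w k))⁻¹ • proj (u k)
  set z := ∑ k, (√(w k) * (u k ⬝ᵥ y)) • u k
  have hz : ∀ l, u l ⬝ᵥ z = √(w l) * (u l ⬝ᵥ y) := hu.dotProduct_sum_smul_eq _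
  have hTz : T *ᵥ z = y := by
    simp_rw [T, sum_smul_proj_mulVec, hz,
      inv_mul_cancel_left₀ (Real.sqrt_pos.mpr (hw _)).ne']
    exact hu.sum_dotProduct_smul_eq y
  have hT : Tᵀ = T := transpose_sum_smul_proj _ _ _
  have hyz : y ⬝ᵥ E *ᵥ y = z ⬝ᵥ (T * E * T) *ᵥ z := by
    rw [← mulVec_mulVec, ← mulVec_mulVec, dotProduct_mulVec z, ← mulVec_transpose, hT, hTz]
  have hzz : z ⬝ᵥ z = ∑ k, w k * (u k ⬝ᵥ y) ^ 2 := by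
    simp_rw [← hu.sum_sq_dotProduct_eq z, hz, mul_pow, Real.sq_sqrt (hw _).le]
  rw [hyz, ← hzz]
  exact abs_dotProduct_mulVec_le _ _

end OrthonormalRows

section Gap

variable {lam : Fin d → ℝ} {j : Fin d} {gj : ℝ}

def gapWeight (lam : Fin d → ℝ) (j : Fin d) (gj : ℝ) (k : Fin d) : ℝ :=
  if k = j then gj else |lam k - lam j|

lemma gapWeight_pos (hgj : 0 < gj) (hg : ∀ k ≠ j, gj ≤ |lam k - lam j|) (k : Fin d) :
    0 < gapWeight lam j gj k := by
  unfold gapWeight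
  split_ifs with hk
  · exact hgj
  · exact hgj.trans_le (hg k hk)

lemma sqrtAbsRes_add_smul_proj (u : Fin d → Fin d → ℝ) :
    sqrtAbsRes lam u j + (√gj)⁻¹ • proj (u j) =
      ∑ k, (√(gapWeight lam j gj k))⁻¹ • proj (u k) := by
  rw [sqrtAbsRes, filter_ne', ← sum_erase_add _ _ (mem_univ j), gapWeight, if_pos rfl]
  congr 1
  exact sum_congr rfl fun k hk => by rw [gapWeight, if_neg (ne_of_mem_erase hk)]

lemma abs_dotProduct_mulVec_le_delta {u : Fin d → Fin d → ℝ} (hu : OrthonormalRows u)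
    (hgj : 0 < gj) (hg : ∀ k ≠ j, gj ≤ |lam k - lam j|) (E : Matrix (Fin d) (Fin d) ℝ)
    (y : Fin d → ℝ) :
    |y ⬝ᵥ E *ᵥ y| ≤ delta lam u j gj E * ∑ k, gapWeight lam j gj k * (u k ⬝ᵥ y) ^ 2 := by
  have h := hu.abs_dotProduct_mulVec_le_mul_sum (gapWeight_pos hgj hg) E y
  rwa [← sqrtAbsRes_add_smul_proj] at h

variable {δ : ℝ}

lemma add_mul_gapWeight_le (hlam : Antitone lam) (hδ0 : 0 ≤ δ) (hδ1 : δ ≤ 1) (hgj : 0 ≤ gj)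
    {k : Fin d} (hk : j ≤ k) : lam k + δ * gapWeight lam j gj k ≤ lam j + δ * gj := by
  rcases eq_or_ne k j with rfl | hkj
  · rw [gapWeight, if_pos rfl]
  · rw [gapWeight, if_neg hkj, abs_of_nonpos (sub_nonpos.2 (hlam hk))]
    nlinarith [mul_nonneg (sub_nonneg.2 hδ1) (sub_nonneg.2 (hlam hk)), mul_nonneg hδ0 hgj]

lemma sub_mul_gapWeight_le (hlam : Antitone lam) (hδ0 : 0 ≤ δ) (hδ1 : δ ≤ 1) (hgj : 0 ≤ gj)
    {k : Fin d} (hk : k ≤ j) : lam j - δ * gj ≤ lam k - δ * gapWeight lam j gj k := by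
  rcases eq_or_ne k j with rfl | hkj
  · rw [gapWeight, if_pos rfl]
  · rw [gapWeight, if_neg hkj, abs_of_nonneg (sub_nonneg.2 (hlam hk))]
    nlinarith [mul_nonneg (sub_nonneg.2 hδ1) (sub_nonneg.2 (hlam hk)), mul_nonneg hδ0 hgj]

end Gap

theorem stmt2_general {d : ℕ} (lam : Fin d → ℝ) (u : Fin d → Fin d → ℝ)
    (hON : ∀ k l, u k ⬝ᵥ u l = if k = l then (1 : ℝ) else 0)
    (hlam : Antitone lam)
    (E : Matrix (Fin d) (Fin d) ℝ)
    (j : Fin d) (gj : ℝ) (hgj_pos : 0 < gj)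
    (hgj : IsLeast {x : ℝ | ∃ k, k ≠ j ∧ x = |lam k - lam j|} gj)
    (lamh : Fin d → ℝ) (uh : Fin d → Fin d → ℝ)
    (hONh : ∀ k l, uh k ⬝ᵥ uh l = if k = l then (1 : ℝ) else 0)
    (hlamh : Antitone lamh)
    (hdecomp : (∑ k, lam k • proj (u k)) + E = ∑ k, lamh k • proj (uh k))
    (hdelta : delta lam u j gj E < 1 / 2) :
    |lamh j - lam j| ≤ delta lam u j gj E * gj := by
  set δ := delta lam u j gj E
  set w := gapWeight lam j gj
  have hδ0 : 0 ≤ δ := norm_nonneg _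
  have hδ1 : δ ≤ 1 := by linarith
  have hcard : d < #(Iic j) + #(Ici j) := by
    rw [Fin.card_Iic, Fin.card_Ici]
    omega
  have hpert : ∀ x, |∑ k, lamh k * (uh k ⬝ᵥ x) ^ 2 - ∑ k, lam k * (u k ⬝ᵥ x) ^ 2| ≤
      δ * ∑ k, w k * (u k ⬝ᵥ x) ^ 2 := by
    intro x
    have h := congrArg (fun M => x ⬝ᵥ M *ᵥ x) hdecomp
    simp only [add_mulVec, dotProduct_add, dotProduct_sum_smul_proj_mulVec] at h
    rw [← h, add_sub_cancel_left]
    exact abs_dotProduct_mulVec_le_delta hON hgj_pos (fun k hk => hgj.2 ⟨k, hk, rfl⟩) E x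
  have upper : lamh j ≤ lam j + δ * gj := by
    refine OrthonormalRows.le_of_forall_sum_mul_sq_le (μ := fun k => lam k + δ * w k) hON hONh
      hcard (fun k hk => hlamh (mem_Iic.1 hk))
      (fun k hk => add_mul_gapWeight_le hlam hδ0 hδ1 hgj_pos.le (mem_Ici.1 hk)) fun x => ?_
    simp only [add_mul, sum_add_distrib, mul_assoc, ← mul_sum]
    linarith [(abs_le.1 (hpert x)).2]
  have lower : lam j - δ * gj ≤ lamh j := by
    refine OrthonormalRows.le_of_forall_sum_mul_sq_le (ν := fun k => lam k - δ * w k) hONh hON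
      hcard (fun k hk => sub_mul_gapWeight_le hlam hδ0 hδ1 hgj_pos.le (mem_Iic.1 hk))
      (fun k hk => hlamh (mem_Ici.1 hk)) fun x => ?_
    simp only [sub_mul, sum_sub_distrib, mul_assoc, ← mul_sum]
    linarith [(abs_le.1 (hpert x)).1]
  exact abs_sub_le_iff.2 ⟨by linarith, by linarith⟩

theorem stmt2 {d : ℕ} (lam : Fin d → ℝ) (u : Fin d → Fin d → ℝ)
    (hON : ∀ k l, u k ⬝ᵥ u l = if k = l then (1 : ℝ) else 0)
    (hlam : Antitone lam)
    (E : Matrix (Fin d) (Fin d) ℝ) (hE : E.IsSymm)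
    (j : Fin d) (gj : ℝ) (hgj_pos : 0 < gj)
    (hgj : IsLeast {x : ℝ | ∃ k, k ≠ j ∧ x = |lam k - lam j|} gj)
    (lamh : Fin d → ℝ) (uh : Fin d → Fin d → ℝ)
    (hONh : ∀ k l, uh k ⬝ᵥ uh l = if k = l then (1 : ℝ) else 0)
    (hlamh : Antitone lamh)
    (hdecomp : (∑ k, lam k • proj (u k)) + E = ∑ k, lamh k • proj (uh k))
    (hdelta : delta lam u j gj E < 1 / 2) :
    |lamh j - lam j| ≤ delta lam u j gj E * gj :=
  stmt2_general lam u hON hlam E j gj hgj_pos hgj lamh uh hONh hlamh hdecomp hdelta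
end

section
/- Let n ≥ 1, m ≥ 1, and k_1,...,k_{n+1} nonnegative integers summing to m with k_a = 0 for some a. Then ‖R_j^{(k_1)} E ··· E R_j^{(k_{n+1})}‖_2 ≤ g_j^{n−m} g_j^{-1/2} ‖|R_j|^{1/2} E P_j‖_2 (δ'_j)^{n−1}. -/
open Matrix Finset

/-- `R_j^{(k)}`: equals `-P_j` for `k = 0` and `R_j^k` for `k > 0`. -/
noncomputable def rpow' {d : ℕ} (lam : Fin d → ℝ) (u : Fin d → Fin d → ℝ) (j : Fin d)
    (k : ℕ) : Matrix (Fin d) (Fin d) ℝ :=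
  if k = 0 then -proj (u j) else (res lam u j) ^ k

/-- `R_j^{(k_1)} E R_j^{(k_2)} ⋯ E R_j^{(k_{n+1})}`. -/
noncomputable def chainProd {d : ℕ} (lam : Fin d → ℝ) (u : Fin d → Fin d → ℝ) (j : Fin d)
    (E : Matrix (Fin d) (Fin d) ℝ) {n : ℕ} (k : Fin (n + 1) → ℕ) :
    Matrix (Fin d) (Fin d) ℝ :=
  rpow' lam u j (k 0) * (List.ofFn (fun i : Fin n => E * rpow' lam u j (k i.succ))).prod

/-!
Every factor splits as `R^{(t)} = L_t C_t L_t` (`sideFactor`, `midFactor`) with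
`L_0 = g^{-1/2} P`, `C_0 = -g P` and, for `t > 0`, `L_t = |R|^{1/2}`,
`C_t = |R|^{-1/2} R^t |R|^{-1/2}`.
All of these are diagonal in the eigenbasis, so `‖L_t‖ ≤ g^{-1/2}` and `‖C_t‖ ≤ g^{1-t}`.
Regrouped, the chain reads
`L_{k_1} C_{k_1} (L_{k_1} E L_{k_2}) C_{k_2} ⋯ (L_{k_n} E L_{k_{n+1}}) C_{k_{n+1}} L_{k_{n+1}}`,
and each block `L_a E L_b` has operator norm at most `δ'_j`. Since some `k_a` vanishes and
`m ≥ 1` forces another to be positive, some block has exactly one index zero; it equals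
`g^{-1/2} |R|^{1/2} E P` or its transpose, and it alone is estimated in the Hilbert–Schmidt norm.
-/

open scoped Matrix.Norms.L2Operator

section HilbertSchmidt

variable {d : ℕ}

lemma l2_opNorm_transpose (A : Matrix (Fin d) (Fin d) ℝ) : ‖Aᵀ‖ = ‖A‖ := by
  rw [← conjTranspose_eq_transpose_of_trivial, l2_opNorm_conjTranspose]

lemma hsNorm_eq_sqrt (A : Matrix (Fin d) (Fin d) ℝ) :
    hsNorm A = √(∑ j, ∑ i, A i j ^ 2) := by
  simp only [hsNorm, trace, Matrix.diag, mul_apply, transpose_apply, sq]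

lemma hsNorm_nonneg (A : Matrix (Fin d) (Fin d) ℝ) : 0 ≤ hsNorm A := Real.sqrt_nonneg _

lemma hsNorm_transpose (A : Matrix (Fin d) (Fin d) ℝ) : hsNorm Aᵀ = hsNorm A := by
  rw [hsNorm_eq_sqrt, hsNorm_eq_sqrt, Finset.sum_comm]
  rfl

lemma hsNorm_smul (c : ℝ) (A : Matrix (Fin d) (Fin d) ℝ) :
    hsNorm (c • A) = |c| * hsNorm A := by
  simp only [hsNorm_eq_sqrt, Matrix.smul_apply, smul_eq_mul, mul_pow, ← Finset.mul_sum]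
  rw [Real.sqrt_mul (sq_nonneg c), Real.sqrt_sq_eq_abs]

lemma hsNorm_mul_le_norm_mul_hsNorm (A B : Matrix (Fin d) (Fin d) ℝ) :
    hsNorm (A * B) ≤ ‖A‖ * hsNorm B := by
  rw [hsNorm_eq_sqrt, hsNorm_eq_sqrt, ← Real.sqrt_sq (norm_nonneg A),
    ← Real.sqrt_mul (sq_nonneg _), Finset.mul_sum]
  gcongr with j
  have := pow_le_pow_left₀ (norm_nonneg _) (l2_opNorm_mulVec A (WithLp.toLp 2 (fun i => B i j))) 2
  simpa [EuclideanSpace.real_norm_sq_eq, mul_pow, mulVec, dotProduct, mul_apply] using this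

lemma hsNorm_mul_le_hsNorm_mul_norm (A B : Matrix (Fin d) (Fin d) ℝ) :
    hsNorm (A * B) ≤ hsNorm A * ‖B‖ := by
  rw [← hsNorm_transpose, transpose_mul, ← hsNorm_transpose A, ← l2_opNorm_transpose B,
    mul_comm]
  exact hsNorm_mul_le_norm_mul_hsNorm _ _

lemma norm_le_hsNorm (A : Matrix (Fin d) (Fin d) ℝ) : ‖A‖ ≤ hsNorm A := by
  rw [l2_opNorm_def]
  refine ContinuousLinearMap.opNorm_le_bound _ (hsNorm_nonneg A) fun x => ?_
  rw [← sq_le_sq₀ (norm_nonneg _) (mul_nonneg (hsNorm_nonneg A) (norm_nonneg x)), mul_pow,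
    hsNorm_eq_sqrt, Real.sq_sqrt (by positivity), EuclideanSpace.real_norm_sq_eq,
    EuclideanSpace.real_norm_sq_eq, Finset.sum_comm, Finset.sum_mul]
  gcongr with i
  simpa [mulVec, dotProduct] using Finset.sum_mul_sq_le_sq_mul_sq Finset.univ (A i) x

end HilbertSchmidt

section OrthogonalConj

variable {d : ℕ} (U : Matrix (Fin d) (Fin d) ℝ)

def conjDiag (f : Fin d → ℝ) : Matrix (Fin d) (Fin d) ℝ := Uᵀ * diagonal f * U

lemma conjDiag_transpose (f : Fin d → ℝ) : (conjDiag U f)ᵀ = conjDiag U f := by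
  simp [conjDiag, transpose_mul, Matrix.mul_assoc]

variable {U} (hU : U * Uᵀ = 1)
include hU

lemma conjDiag_mul (f g : Fin d → ℝ) :
    conjDiag U f * conjDiag U g = conjDiag U (f * g) := by
  simp only [conjDiag, Matrix.mul_assoc]
  rw [← Matrix.mul_assoc U, hU, Matrix.one_mul, ← Matrix.mul_assoc (diagonal f),
    diagonal_mul_diagonal]
  rfl

lemma conjDiag_pow (f : Fin d → ℝ) (t : ℕ) : conjDiag U f ^ t = conjDiag U (f ^ t) := by
  induction t with
  | zero => simpa [conjDiag] using (mul_eq_one_comm.mp hU).symm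
  | succ t ih => rw [pow_succ, ih, conjDiag_mul hU, pow_succ]

lemma norm_le_one_of_mul_transpose_eq_one : ‖U‖ ≤ 1 := by
  have h : ‖Uᵀ‖ * ‖Uᵀ‖ ≤ 1 := by
    rw [← l2_opNorm_conjTranspose_mul_self, conjTranspose_eq_transpose_of_trivial,
      transpose_transpose, hU, ← diagonal_one, l2_opNorm_diagonal]
    exact (pi_norm_le_iff_of_nonneg zero_le_one).mpr fun _ => by simp
  rw [← l2_opNorm_transpose]
  nlinarith [norm_nonneg Uᵀ]

lemma norm_conjDiag_le {f : Fin d → ℝ} {c : ℝ} (hc : 0 ≤ c) (hf : ∀ l, |f l| ≤ c) :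
    ‖conjDiag U f‖ ≤ c := by
  have hUt : ‖Uᵀ‖ ≤ 1 := l2_opNorm_transpose U ▸ norm_le_one_of_mul_transpose_eq_one hU
  have hD : ‖diagonal f‖ ≤ c := by
    rw [l2_opNorm_diagonal]
    exact (pi_norm_le_iff_of_nonneg hc).mpr hf
  calc ‖conjDiag U f‖ ≤ ‖Uᵀ‖ * ‖diagonal f‖ * ‖U‖ :=
        (norm_mul_le _ _).trans (mul_le_mul_of_nonneg_right (norm_mul_le _ _) (norm_nonneg _))
    _ ≤ 1 * c * 1 := by
        gcongr
        exact norm_le_one_of_mul_transpose_eq_one hU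
    _ = c := by ring

end OrthogonalConj

section Eigenbasis

variable {d : ℕ} (u : Fin d → Fin d → ℝ) (j : Fin d)

lemma mul_transpose_of_orthonormal
    (hON : ∀ k l, u k ⬝ᵥ u l = if k = l then (1 : ℝ) else 0) : of u * (of u)ᵀ = 1 := by
  ext a b
  simpa [mul_apply, one_apply, dotProduct] using hON a b

lemma sum_smul_proj (f : Fin d → ℝ) : ∑ l, f l • proj (u l) = conjDiag (of u) f := by
  ext a b
  simp only [proj, Matrix.sum_apply, Matrix.smul_apply, smul_eq_mul, vecMulVec_apply, conjDiag,
    mul_apply, transpose_apply, of_apply, diagonal_apply, mul_ite, mul_zero, sum_ite_eq', mem_univ,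
    if_true]
  exact Finset.sum_congr rfl fun l _ => by ring

lemma sum_filter_ne_smul_proj (c : Fin d → ℝ) :
    ∑ l ∈ univ.filter (fun l => l ≠ j), c l • proj (u l) =
      conjDiag (of u) (fun l => if l = j then 0 else c l) := by
  rw [← sum_smul_proj, Finset.sum_filter]
  refine Finset.sum_congr rfl fun l _ => ?_
  split_ifs <;> simp_all

lemma proj_eq_conjDiag : proj (u j) = conjDiag (of u) (Pi.single j 1) := by
  rw [← sum_smul_proj, Finset.sum_eq_single j] <;> simp_all

end Eigenbasis

section Factors

variable {d : ℕ} (lam : Fin d → ℝ) (u : Fin d → Fin d → ℝ) (j : Fin d) (gj : ℝ)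

lemma sqrtAbsRes_eq_conjDiag : sqrtAbsRes lam u j =
    conjDiag (of u) (fun l => if l = j then 0 else (√|lam l - lam j|)⁻¹) :=
  sum_filter_ne_smul_proj u j _

lemma invSqrtAbsRes_eq_conjDiag : invSqrtAbsRes lam u j =
    conjDiag (of u) (fun l => if l = j then 0 else √|lam l - lam j|) :=
  sum_filter_ne_smul_proj u j _

lemma res_eq_conjDiag : res lam u j =
    conjDiag (of u) (fun l => if l = j then 0 else (lam l - lam j)⁻¹) :=
  sum_filter_ne_smul_proj u j _

noncomputable def sideFactor (t : ℕ) : Matrix (Fin d) (Fin d) ℝ :=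
  if t = 0 then (√gj)⁻¹ • proj (u j) else sqrtAbsRes lam u j

noncomputable def midFactor (t : ℕ) : Matrix (Fin d) (Fin d) ℝ :=
  if t = 0 then -gj • proj (u j)
  else invSqrtAbsRes lam u j * res lam u j ^ t * invSqrtAbsRes lam u j

variable {u} (hON : ∀ k l, u k ⬝ᵥ u l = if k = l then (1 : ℝ) else 0)
include hON

lemma proj_mul_self : proj (u j) * proj (u j) = proj (u j) := by
  rw [proj_eq_conjDiag, conjDiag_mul (mul_transpose_of_orthonormal u hON), ← Pi.single_mul,
    one_mul]

lemma norm_proj_le_one : ‖proj (u j)‖ ≤ 1 := by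
  rw [proj_eq_conjDiag]
  refine norm_conjDiag_le (mul_transpose_of_orthonormal u hON) zero_le_one fun l => ?_
  rcases eq_or_ne l j with rfl | hl <;> simp [*]

lemma rpow'_eq_sideFactor_mul_midFactor_mul (hgj : 0 < gj) (hsimple : ∀ l ≠ j, lam l ≠ lam j)
    (t : ℕ) :
    rpow' lam u j t =
      sideFactor lam u j gj t * midFactor lam u j gj t * sideFactor lam u j gj t := by
  have hU := mul_transpose_of_orthonormal u hON
  rcases eq_or_ne t 0 with rfl | ht
  · have hsq : (√gj)⁻¹ * -gj * (√gj)⁻¹ = -1 := by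
      field_simp
      rw [Real.sq_sqrt hgj.le]
    simp only [rpow', sideFactor, midFactor, if_true, smul_mul_smul_comm, proj_mul_self j hON, hsq,
      neg_one_smul]
  · simp only [rpow', sideFactor, midFactor, if_neg ht, sqrtAbsRes_eq_conjDiag,
      invSqrtAbsRes_eq_conjDiag, res_eq_conjDiag, conjDiag_pow hU, conjDiag_mul hU]
    congr 1
    funext l
    by_cases hl : l = j
    · simp [hl, ht]
    · have ha : 0 < √|lam l - lam j| := by
        simpa [sub_eq_zero] using hsimple l hl
      simp only [Pi.mul_apply, Pi.pow_apply, if_neg hl]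
      field_simp

end Factors

section FactorBounds

variable {d : ℕ} (lam : Fin d → ℝ) {u : Fin d → Fin d → ℝ} (j : Fin d) {gj : ℝ}
  (hON : ∀ k l, u k ⬝ᵥ u l = if k = l then (1 : ℝ) else 0)
  (hgj : 0 < gj) (hgap : ∀ l ≠ j, gj ≤ |lam l - lam j|)
include hON hgj hgap

lemma norm_sideFactor_le (t : ℕ) : ‖sideFactor lam u j gj t‖ ≤ (√gj)⁻¹ := by
  have hU := mul_transpose_of_orthonormal u hON
  rcases eq_or_ne t 0 with rfl | ht
  · rw [sideFactor, if_pos rfl, norm_smul, norm_inv, Real.norm_of_nonneg (Real.sqrt_nonneg _)]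
    exact mul_le_of_le_one_right (by positivity) (norm_proj_le_one j hON)
  · rw [sideFactor, if_neg ht, sqrtAbsRes_eq_conjDiag]
    refine norm_conjDiag_le hU (by positivity) fun l => ?_
    split_ifs with hl
    · simp
    · rw [abs_of_nonneg (by positivity)]
      gcongr
      exact hgap l hl

lemma norm_midFactor_le (t : ℕ) : ‖midFactor lam u j gj t‖ ≤ gj * gj⁻¹ ^ t := by
  have hU := mul_transpose_of_orthonormal u hON
  rcases eq_or_ne t 0 with rfl | ht
  · rw [midFactor, if_pos rfl, norm_smul, norm_neg, Real.norm_of_nonneg hgj.le, pow_zero, mul_one]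
    exact mul_le_of_le_one_right hgj.le (norm_proj_le_one j hON)
  · obtain ⟨τ, rfl⟩ := Nat.exists_eq_succ_of_ne_zero ht
    simp only [midFactor, if_neg ht, invSqrtAbsRes_eq_conjDiag, res_eq_conjDiag, conjDiag_pow hU,
      conjDiag_mul hU]
    refine norm_conjDiag_le hU (by positivity) fun l => ?_
    by_cases hl : l = j
    · simp only [hl, Pi.mul_apply, Pi.pow_apply, if_true, zero_mul, abs_zero]
      positivity
    · have ha := hgj.trans_le (hgap l hl)
      simp only [Pi.mul_apply, Pi.pow_apply, if_neg hl, abs_mul, abs_pow, abs_inv,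
        abs_of_nonneg (Real.sqrt_nonneg _)]
      calc √|lam l - lam j| * |lam l - lam j|⁻¹ ^ (τ + 1) * √|lam l - lam j|
          = |lam l - lam j|⁻¹ ^ τ := by
            rw [mul_right_comm, Real.mul_self_sqrt ha.le, pow_succ]
            field_simp
        _ ≤ gj⁻¹ ^ τ := by
            gcongr
            exact hgap l hl
        _ = gj * gj⁻¹ ^ (τ + 1) := by
            rw [pow_succ]
            field_simp

end FactorBounds

section Blocks

variable {d : ℕ} (lam : Fin d → ℝ) (u : Fin d → Fin d → ℝ) (j : Fin d) (gj : ℝ)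
  {E : Matrix (Fin d) (Fin d) ℝ} (hE : E.IsSymm)
include hE

lemma hsNorm_proj_mul_mul_sqrtAbsRes : hsNorm (proj (u j) * E * sqrtAbsRes lam u j) =
    hsNorm (sqrtAbsRes lam u j * E * proj (u j)) := by
  rw [← hsNorm_transpose]
  congr 1
  rw [transpose_mul, transpose_mul, hE.eq, sqrtAbsRes_eq_conjDiag, conjDiag_transpose, proj,
    transpose_vecMulVec, Matrix.mul_assoc]

lemma hsNorm_sideFactor_mul_mul_of_mixed {a b : ℕ} (hab : a = 0 ↔ b ≠ 0) :
    hsNorm (sideFactor lam u j gj a * E * sideFactor lam u j gj b) =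
      (√gj)⁻¹ * hsNorm (sqrtAbsRes lam u j * E * proj (u j)) := by
  have hs : |(√gj)⁻¹| = (√gj)⁻¹ := abs_of_nonneg (by positivity)
  by_cases ha : a = 0
  · rw [sideFactor, if_pos ha, sideFactor, if_neg (hab.1 ha), smul_mul_assoc, smul_mul_assoc,
      hsNorm_smul, hs, hsNorm_proj_mul_mul_sqrtAbsRes lam u j hE]
  · rw [sideFactor, if_neg ha, sideFactor, if_pos (not_not.1 (mt hab.2 ha)), mul_smul_comm,
      hsNorm_smul, hs]

lemma norm_sideFactor_mul_mul_le_delta' (hgj : 0 ≤ gj) (a b : ℕ) :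
    ‖sideFactor lam u j gj a * E * sideFactor lam u j gj b‖ ≤ delta' lam u j gj E := by
  by_cases hab : a = 0 ↔ b ≠ 0
  · calc ‖sideFactor lam u j gj a * E * sideFactor lam u j gj b‖
        ≤ hsNorm (sideFactor lam u j gj a * E * sideFactor lam u j gj b) := norm_le_hsNorm _
      _ ≤ delta' lam u j gj E := by
        rw [hsNorm_sideFactor_mul_mul_of_mixed lam u j gj hE hab]
        exact le_max_of_le_right (le_max_left _ _)
  · obtain ⟨rfl, rfl⟩ | ⟨ha, hb⟩ : (a = 0 ∧ b = 0) ∨ (a ≠ 0 ∧ b ≠ 0) := by tauto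
    · have hss : (√gj)⁻¹ * (√gj)⁻¹ = gj⁻¹ := by
        rw [← mul_inv, Real.mul_self_sqrt hgj]
      rw [sideFactor, if_pos rfl, smul_mul_assoc, smul_mul_smul_comm, hss, norm_smul,
        Real.norm_of_nonneg (inv_nonneg.2 hgj)]
      calc gj⁻¹ * ‖proj (u j) * E * proj (u j)‖
          ≤ gj⁻¹ * hsNorm (proj (u j) * E * proj (u j)) := by
            gcongr
            exact norm_le_hsNorm _
        _ ≤ delta' lam u j gj E := le_max_of_le_right (le_max_right _ _)
    · rw [sideFactor, if_neg ha, sideFactor, if_neg hb]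
      exact le_max_left _ _

end Blocks

section Chain

variable {d : ℕ} (E : Matrix (Fin d) (Fin d) ℝ) (L C : ℕ → Matrix (Fin d) (Fin d) ℝ)

def sandwich : (n : ℕ) → (Fin (n + 1) → ℕ) → Matrix (Fin d) (Fin d) ℝ
  | 0, k => C (k 0) * L (k 0)
  | n + 1, k => C (k 0) * (L (k 0) * E * L (k 1)) * sandwich n (Fin.tail k)

lemma chainProd_succ (lam : Fin d → ℝ) (u : Fin d → Fin d → ℝ) (j : Fin d) {n : ℕ}
    (k : Fin (n + 2) → ℕ) :
    chainProd lam u j E k = rpow' lam u j (k 0) * E * chainProd lam u j E (Fin.tail k) := by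
  simp only [chainProd, List.ofFn_succ, List.prod_cons, Matrix.mul_assoc]
  rfl

lemma chainProd_eq_mul_sandwich (lam : Fin d → ℝ) (u : Fin d → Fin d → ℝ) (j : Fin d)
    (hX : ∀ t, rpow' lam u j t = L t * C t * L t) :
    ∀ {n : ℕ} (k : Fin (n + 1) → ℕ), chainProd lam u j E k = L (k 0) * sandwich E L C n k
  | 0, k => by simp [chainProd, sandwich, hX, Matrix.mul_assoc]
  | n + 1, k => by
    rw [chainProd_succ, chainProd_eq_mul_sandwich lam u j hX, hX, sandwich]
    simp only [Fin.tail, Fin.succ_zero_eq_one, Matrix.mul_assoc]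

lemma exists_tail_eq_zero_and_ne_zero {n : ℕ} {k : Fin (n + 2) → ℕ}
    (hk : ∃ a b, k a = 0 ∧ k b ≠ 0) (h01 : k 0 = 0 ↔ k 1 = 0) :
    ∃ a b, Fin.tail k a = 0 ∧ Fin.tail k b ≠ 0 := by
  have shift : ∀ p : ℕ → Prop, (p (k 0) ↔ p (k 1)) → ∀ a, p (k a) →
      ∃ a', p (Fin.tail k a') := by
    intro p hp a ha
    cases a using Fin.cases with
    | zero => exact ⟨0, hp.1 ha⟩
    | succ a => exact ⟨a, ha⟩
  obtain ⟨a, b, ha, hb⟩ := hk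
  obtain ⟨a', ha'⟩ := shift (· = 0) h01 a ha
  obtain ⟨b', hb'⟩ := shift (· ≠ 0) (not_congr h01) b hb
  exact ⟨a', b', ha', hb'⟩

variable {E L C} {s δ : ℝ} {w : ℕ → ℝ} (hw : ∀ t, 0 ≤ w t) (hC : ∀ t, ‖C t‖ ≤ w t)
  (hL : ∀ t, ‖L t‖ ≤ s) (hB : ∀ a b, ‖L a * E * L b‖ ≤ δ)
include hw hC hL hB

lemma norm_sandwich_le : ∀ {n : ℕ} (k : Fin (n + 1) → ℕ),
    ‖sandwich E L C n k‖ ≤ δ ^ n * s * ∏ i, w (k i)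
  | 0, k => by
    simpa [sandwich, mul_comm] using
      (norm_mul_le _ _).trans (mul_le_mul (hC _) (hL _) (norm_nonneg _) (hw _))
  | n + 1, k => by
    have hδ : 0 ≤ δ := (norm_nonneg _).trans (hB 0 0)
    rw [sandwich, Fin.prod_univ_succ]
    calc ‖C (k 0) * (L (k 0) * E * L (k 1)) * sandwich E L C n (Fin.tail k)‖
        ≤ w (k 0) * δ * (δ ^ n * s * ∏ i, w (Fin.tail k i)) :=
          (norm_mul_le _ _).trans <| mul_le_mul
            ((norm_mul_le _ _).trans (mul_le_mul (hC _) (hB _ _) (norm_nonneg _) (hw _)))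
            (norm_sandwich_le _) (norm_nonneg _) (mul_nonneg (hw _) hδ)
      _ = δ ^ (n + 1) * s * (w (k 0) * ∏ i, w (Fin.tail k i)) := by ring

lemma hsNorm_sandwich_le {η : ℝ}
    (hM : ∀ a b, (a = 0 ↔ b ≠ 0) → hsNorm (L a * E * L b) ≤ η) :
    ∀ {n : ℕ} (k : Fin (n + 2) → ℕ), (∃ a b, k a = 0 ∧ k b ≠ 0) →
      hsNorm (sandwich E L C (n + 1) k) ≤ η * δ ^ n * s * ∏ i, w (k i) := by
  intro n k hk
  have hδ : 0 ≤ δ := (norm_nonneg _).trans (hB 0 0)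
  have hη : 0 ≤ η := (hsNorm_nonneg _).trans (hM 0 1 (by simp))
  rw [sandwich, Fin.prod_univ_succ]
  by_cases h01 : k 0 = 0 ↔ k 1 ≠ 0
  · calc hsNorm (C (k 0) * (L (k 0) * E * L (k 1)) * sandwich E L C n (Fin.tail k))
        ≤ ‖C (k 0)‖ * hsNorm (L (k 0) * E * L (k 1)) * ‖sandwich E L C n (Fin.tail k)‖ :=
          (hsNorm_mul_le_hsNorm_mul_norm _ _).trans <|
            mul_le_mul_of_nonneg_right (hsNorm_mul_le_norm_mul_hsNorm _ _) (norm_nonneg _)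
      _ ≤ w (k 0) * η * (δ ^ n * s * ∏ i, w (Fin.tail k i)) :=
          mul_le_mul (mul_le_mul (hC _) (hM _ _ h01) (hsNorm_nonneg _) (hw _))
            (norm_sandwich_le hw hC hL hB _) (norm_nonneg _) (mul_nonneg (hw _) hη)
      _ = η * δ ^ n * s * (w (k 0) * ∏ i, w (Fin.tail k i)) := by ring
  · have htail := exists_tail_eq_zero_and_ne_zero hk (by tauto)
    cases n with
    | zero =>
      obtain ⟨a, b, ha, hb⟩ := htail
      exact absurd (Subsingleton.elim (α := Fin 1) a b ▸ ha) hb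
    | succ n =>
      calc hsNorm (C (k 0) * (L (k 0) * E * L (k 1)) * sandwich E L C (n + 1) (Fin.tail k))
          ≤ ‖C (k 0)‖ * ‖L (k 0) * E * L (k 1)‖ *
              hsNorm (sandwich E L C (n + 1) (Fin.tail k)) :=
            (hsNorm_mul_le_norm_mul_hsNorm _ _).trans <|
              mul_le_mul_of_nonneg_right (norm_mul_le _ _) (hsNorm_nonneg _)
        _ ≤ w (k 0) * δ * (η * δ ^ n * s * ∏ i, w (Fin.tail k i)) :=
            mul_le_mul (mul_le_mul (hC _) (hB _ _) (norm_nonneg _) (hw _))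
              (hsNorm_sandwich_le hM _ htail) (hsNorm_nonneg _) (mul_nonneg (hw _) hδ)
        _ = η * δ ^ (n + 1) * s * (w (k 0) * ∏ i, w (Fin.tail k i)) := by ring

end Chain

theorem stmt8_general {d : ℕ} (lam : Fin d → ℝ) (u : Fin d → Fin d → ℝ)
    (hON : ∀ k l, u k ⬝ᵥ u l = if k = l then (1 : ℝ) else 0)
    (E : Matrix (Fin d) (Fin d) ℝ) (hE : E.IsSymm)
    (j : Fin d) (gj : ℝ) (hgj_pos : 0 < gj)
    (hgj : IsLeast {x : ℝ | ∃ k, k ≠ j ∧ x = |lam k - lam j|} gj)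
    (n m : ℕ) (hn : 1 ≤ n) (hm : 1 ≤ m) (k : Fin (n + 1) → ℕ) (hk : ∑ i, k i = m)
    (hzero : ∃ a, k a = 0) :
    hsNorm (chainProd lam u j E k) ≤
      gj ^ ((n : ℤ) - (m : ℤ)) * (Real.sqrt gj)⁻¹ *
        hsNorm (sqrtAbsRes lam u j * E * proj (u j)) * delta' lam u j gj E ^ (n - 1) := by
  obtain ⟨n, rfl⟩ : ∃ n', n = n' + 1 := ⟨n - 1, by omega⟩
  have hgap : ∀ l ≠ j, gj ≤ |lam l - lam j| := fun l hl => hgj.2 ⟨l, hl, rfl⟩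
  have hsimple : ∀ l ≠ j, lam l ≠ lam j := fun l hl h => by
    simpa [h] using hgj_pos.trans_le (hgap l hl)
  have hmixed : ∃ a b, k a = 0 ∧ k b ≠ 0 := by
    obtain ⟨a, ha⟩ := hzero
    obtain ⟨b, -, hb⟩ := Finset.exists_ne_zero_of_sum_ne_zero (hk.trans_ne (by omega))
    exact ⟨a, b, ha, hb⟩
  set L := sideFactor lam u j gj
  set h := hsNorm (sqrtAbsRes lam u j * E * proj (u j))
  have hsandwich := hsNorm_sandwich_le (fun t => by positivity)
    (norm_midFactor_le lam j hON hgj_pos hgap) (norm_sideFactor_le lam j hON hgj_pos hgap)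
    (norm_sideFactor_mul_mul_le_delta' lam u j gj hE hgj_pos.le)
    (fun a b hab => (hsNorm_sideFactor_mul_mul_of_mixed lam u j gj hE hab).le) k hmixed
  have hweights : ∏ i, gj * gj⁻¹ ^ k i = gj ^ (n + 2) * gj⁻¹ ^ m := by
    rw [Finset.prod_mul_distrib, Finset.prod_const, Finset.card_univ, Fintype.card_fin,
      Finset.prod_pow_eq_pow_sum, hk]
  calc hsNorm (chainProd lam u j E k)
      = hsNorm (L (k 0) * sandwich E L (midFactor lam u j gj) (n + 1) k) := by
        rw [chainProd_eq_mul_sandwich E L _ lam u j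
          (rpow'_eq_sideFactor_mul_midFactor_mul lam j gj hON hgj_pos hsimple)]
    _ ≤ (√gj)⁻¹ * ((√gj)⁻¹ * h * delta' lam u j gj E ^ n * (√gj)⁻¹ *
          ∏ i, gj * gj⁻¹ ^ k i) :=
        (hsNorm_mul_le_norm_mul_hsNorm _ _).trans <| mul_le_mul
          (norm_sideFactor_le lam j hON hgj_pos hgap _) hsandwich (hsNorm_nonneg _) (by positivity)
    _ = gj ^ ((n + 1 : ℕ) - (m : ℤ)) * (√gj)⁻¹ * h *
          delta' lam u j gj E ^ (n + 1 - 1) := by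
        rw [hweights, zpow_sub₀ hgj_pos.ne', zpow_natCast, zpow_natCast, Nat.add_sub_cancel]
        field_simp
        rw [Real.sq_sqrt hgj_pos.le, one_div, inv_pow]
        field_simp
        ring

theorem stmt8 {d : ℕ} (lam : Fin d → ℝ) (u : Fin d → Fin d → ℝ)
    (hON : ∀ k l, u k ⬝ᵥ u l = if k = l then (1 : ℝ) else 0)
    (hlam : Antitone lam)
    (E : Matrix (Fin d) (Fin d) ℝ) (hE : E.IsSymm)
    (j : Fin d) (gj : ℝ) (hgj_pos : 0 < gj)
    (hgj : IsLeast {x : ℝ | ∃ k, k ≠ j ∧ x = |lam k - lam j|} gj)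
    (n m : ℕ) (hn : 1 ≤ n) (hm : 1 ≤ m) (k : Fin (n + 1) → ℕ) (hk : ∑ i, k i = m)
    (hzero : ∃ a, k a = 0) :
    hsNorm (chainProd lam u j E k) ≤
      gj ^ ((n : ℤ) - (m : ℤ)) * (Real.sqrt gj)⁻¹ *
        hsNorm (sqrtAbsRes lam u j * E * proj (u j)) * delta' lam u j gj E ^ (n - 1) :=
  stmt8_general lam u hON E hE j gj hgj_pos hgj n m hn hm k hk hzero
end
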